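/- Fix an integer m ≥ 2 and a holomorphic function Q : ℍ → ℂ. Suppose f, g : ℍ → ℂ are holomorphic, their Wronskian f·(q d/dq)g − g·(q d/dq)f is nowhere zero on ℍ, and each of y = f and y = g satisfies the differential equation (q d/dq)²y + 2·G₂·(q d/dq)y + Q·y = 0. Define functions R₁,…,R_m on ℍ by R₁ = m·Q, R₂ = m·((q d/dq)Q + 4·G₂·Q), and R_{i+1} = (q d/dq)R_i + (2i+2)·G₂·R_i + (i+1)(m−i)·Q·R_{i−1} for 2 ≤ i ≤ m−1. Then, writing ′ for q d/dq, one has W_{(q d/dq)}((f^m)′, (f^{m−1}g)′, …, (g^m)′) = (−1)^{m+1}·R_m·W_{(q d/dq)}(f^m, f^{m−1}g, …, g^m) identically on ℍ. -/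

import Mathlib

open Complex Finset

/-- The Ramanujan derivative `(q d/dq) f = (2πi)⁻¹ df/dτ`. -/
noncomputable def ramD : (ℂ → ℂ) → (ℂ → ℂ) :=
  fun f τ => (2 * (Real.pi : ℂ) * I)⁻¹ * deriv f τ

/-- The Eisenstein series `G₂(τ) = −1/12 + 2∑_{n≥1} n qⁿ/(1−qⁿ)`, `q = e^{2πiτ}`. -/
noncomputable def GTwo (τ : ℂ) : ℂ :=
  -(1 / 12) + 2 * ∑' n : ℕ, ((n : ℂ) + 1) * Complex.exp (2 * (Real.pi : ℂ) * I * τ) ^ (n + 1) /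
    (1 - Complex.exp (2 * (Real.pi : ℂ) * I * τ) ^ (n + 1))

/-- The upper half-plane as a subset of `ℂ`. -/
def UHP : Set ℂ := {z : ℂ | 0 < z.im}

/-!
Write `D = q d/dq`. The operators `L₀ = 1`, `L₁ = D` and
`L_{i+2} = D ∘ L_{i+1} + (2i+2) G₂ L_{i+1} + (i+1)(m-i) Q L_i`
satisfy `L_i (y^m) = m(m-1)⋯(m-i+1) y^{m-i} (Dy)^i` for every solution `y` of
`D²y + 2 G₂ Dy + Q y = 0`. So the monic operator `L_{m+1}` of order `m + 1` kills `y^m` for every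
solution, and expanding `(α g + f)^m` in powers of `α` shows that it kills each `f^{m-j} g^j`.
Thus the last row of the Wronskian of the `(f^{m-j} g^j)′` is a combination of the rows of the
Wronskian of the `f^{m-j} g^j`; only the term of order zero survives in the determinant, and its
coefficient is `-R_m`. The cyclic shift of rows gives the sign `(-1)^m`.
Holomorphy of `G₂` follows from `G₂ = -E₂/12`.
-/

lemma isOpen_UHP : IsOpen UHP :=
  isOpen_lt continuous_const continuous_im

open scoped UpperHalfPlane ArithmeticFunction.sigma in
lemma GTwo_eq_neg_E2_div_twelve (z : ℍ) : GTwo z = -(1 / 12) * EisensteinSeries.E2 z := by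
  rw [EisensteinSeries.E2_eq_tsum_cexp,
    ← tsum_pow_div_one_sub_eq_tsum_sigma (UpperHalfPlane.norm_exp_two_pi_I_lt_one z),
    tsum_pnat_eq_tsum_succ (f := fun n ↦ (n : ℂ) ^ 1 * cexp (2 * Real.pi * I * z) ^ n /
      (1 - cexp (2 * Real.pi * I * z) ^ n))]
  simp only [GTwo, pow_one, Nat.cast_add, Nat.cast_one]
  ring

lemma differentiableOn_GTwo : DifferentiableOn ℂ GTwo UHP := by
  refine ((UpperHalfPlane.mdifferentiable_iff.mp E2_mdifferentiable).const_mul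
    (-(1 / 12) : ℂ)).congr fun z hz => ?_
  simp [GTwo_eq_neg_E2_div_twelve ⟨z, hz⟩, UpperHalfPlane.ofComplex_apply_of_im_pos hz]

section RamanujanDerivative

variable {s : Set ℂ} {a b : ℂ → ℂ} {τ : ℂ}

@[simp] lemma ramD_const (c : ℂ) : ramD (fun _ => c) = 0 := by
  funext τ
  simp [ramD]

@[simp] lemma ramD_zero : ramD 0 = 0 :=
  ramD_const 0

lemma ramD_add (ha : DifferentiableAt ℂ a τ) (hb : DifferentiableAt ℂ b τ) :
    ramD (fun z => a z + b z) τ = ramD a τ + ramD b τ := by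
  simp only [ramD, deriv_fun_add ha hb, mul_add]

lemma ramD_mul (ha : DifferentiableAt ℂ a τ) (hb : DifferentiableAt ℂ b τ) :
    ramD (fun z => a z * b z) τ = ramD a τ * b τ + a τ * ramD b τ := by
  simp only [ramD, deriv_fun_mul ha hb]
  ring

lemma ramD_const_mul (c : ℂ) : ramD (fun z => c * a z) τ = c * ramD a τ := by
  simp only [ramD, deriv_const_mul_field]
  ring

lemma ramD_pow (ha : DifferentiableAt ℂ a τ) (n : ℕ) :
    ramD (fun z => a z ^ n) τ = n * a τ ^ (n - 1) * ramD a τ := by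
  simp only [ramD, deriv_fun_pow ha n]
  ring

lemma ramD_sum {ι : Type*} {t : Finset ι} {F : ι → ℂ → ℂ}
    (hF : ∀ k ∈ t, DifferentiableAt ℂ (F k) τ) :
    ramD (fun z => ∑ k ∈ t, F k z) τ = ∑ k ∈ t, ramD (F k) τ := by
  simp only [ramD, deriv_fun_sum hF, mul_sum]

lemma ramD_congr_of_eqOn (hs : IsOpen s) (h : Set.EqOn a b s) (hτ : τ ∈ s) :
    ramD a τ = ramD b τ := by
  rw [ramD, ramD, (Filter.eventuallyEq_of_mem (hs.mem_nhds hτ) h).deriv_eq]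

lemma DifferentiableOn.ramD (hs : IsOpen s) (ha : DifferentiableOn ℂ a s) :
    DifferentiableOn ℂ (_root_.ramD a) s :=
  (ha.deriv hs).const_mul _

lemma DifferentiableOn.iterate_ramD (hs : IsOpen s) (ha : DifferentiableOn ℂ a s) (k : ℕ) :
    DifferentiableOn ℂ (_root_.ramD^[k] a) s := by
  induction k with
  | zero => exact ha
  | succ k ih => rw [Function.iterate_succ_apply']; exact ih.ramD hs

lemma iterate_ramD_sum {ι : Type*} (hs : IsOpen s) (t : Finset ι) (c : ι → ℂ)
    {e : ι → ℂ → ℂ} (he : ∀ j ∈ t, DifferentiableOn ℂ (e j) s) (k : ℕ) :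
    Set.EqOn (ramD^[k] fun z => ∑ j ∈ t, c j * e j z)
      (fun z => ∑ j ∈ t, c j * (ramD^[k] (e j)) z) s := by
  induction k with
  | zero => intro z _; rfl
  | succ k ih =>
    intro z hz
    have hdiff (j) (hj : j ∈ t) : DifferentiableAt ℂ (fun z => c j * (ramD^[k] (e j)) z) z :=
      (((he j hj).iterate_ramD hs k).differentiableAt (hs.mem_nhds hz)).const_mul _
    simp only [Function.iterate_succ_apply']
    rw [ramD_congr_of_eqOn hs ih hz, ramD_sum hdiff]
    simp only [ramD_const_mul]

end RamanujanDerivative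

lemma eq_zero_of_forall_sum_pow_mul_eq_zero {K : Type*} [CommRing K] [IsDomain K] [Infinite K]
    {n : ℕ} {d : ℕ → K} (h : ∀ α : K, ∑ j ∈ range (n + 1), α ^ j * d j = 0) {j : ℕ}
    (hj : j ≤ n) :
    d j = 0 := by
  open Polynomial in
  have hp : ∑ j ∈ range (n + 1), C (d j) * X ^ j = 0 := by
    refine Polynomial.funext fun α => ?_
    simpa only [eval_finsetSum, eval_mul, eval_C, eval_pow, eval_X, eval_zero, mul_comm (d _)]
      using h α
  simpa [finsetSum_coeff, coeff_C_mul_X_pow, Nat.lt_succ_of_le hj] using congrArg (coeff · j) hp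

lemma Matrix.det_eq_of_rows_shift_of_last_row_eq_sum {R : Type*} [CommRing R] {n : ℕ}
    {M N : Matrix (Fin (n + 1)) (Fin (n + 1)) R} (c : Fin (n + 1) → R)
    (hN : ∀ i : Fin n, N i.castSucc = M i.succ) (hlast : N (Fin.last n) = ∑ k, c k • M k) :
    N.det = (-1) ^ n * c 0 * M.det := by
  set A := M.submatrix (finRotate (n + 1)) id
  have hNA : N = A.updateRow (Fin.last n) (∑ k, c (finRotate (n + 1) k) • A k) := by
    funext i
    induction i using Fin.lastCases with
    | last =>
      rw [Matrix.updateRow_self, hlast]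
      exact (Equiv.sum_comp (finRotate (n + 1)) fun k => c k • M k).symm
    | cast i =>
      rw [Matrix.updateRow_ne (Fin.castSucc_lt_last i).ne, hN]
      have hrot : finRotate (n + 1) i.castSucc = i.succ := by
        rw [finRotate_apply, Fin.coeSucc_eq_succ]
      funext j
      simp [A, hrot]
  rw [hNA, Matrix.det_updateRow_sum, finRotate_last, Matrix.det_permute, sign_finRotate]
  simp only [smul_eq_mul, Units.val_pow_eq_pow_val, Units.val_neg, Units.val_one, Int.cast_pow,
    Int.cast_neg, Int.cast_one, Nat.add_sub_cancel]
  ring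

/-- The coefficient of `ramD^[k]` in the operator `L_i` of the header, so that
`L_i = symPowOp G Q m i`. -/
noncomputable def symPowCoeff (G Q : ℂ → ℂ) (m : ℕ) : ℕ → ℕ → ℂ → ℂ
  | 0, k => fun _ => if k = 0 then 1 else 0
  | 1, k => fun _ => if k = 1 then 1 else 0
  | i + 2, k => fun τ =>
      ramD (symPowCoeff G Q m (i + 1) k) τ
        + (if k = 0 then 0 else symPowCoeff G Q m (i + 1) (k - 1) τ)
        + (2 * (i : ℂ) + 2) * G τ * symPowCoeff G Q m (i + 1) k τ
        + ((i : ℂ) + 1) * ((m : ℂ) - (i : ℂ)) * Q τ * symPowCoeff G Q m i k τ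

noncomputable def symPowOp (G Q : ℂ → ℂ) (m i : ℕ) (Y : ℂ → ℂ) (τ : ℂ) : ℂ :=
  ∑ k ∈ range (i + 1), symPowCoeff G Q m i k τ * (ramD^[k] Y) τ

def SolvesOn (G Q : ℂ → ℂ) (s : Set ℂ) (y : ℂ → ℂ) : Prop :=
  ∀ τ ∈ s, ramD (ramD y) τ + 2 * G τ * ramD y τ + Q τ * y τ = 0

section SymmetricPower

variable {G Q Y : ℂ → ℂ} {m : ℕ} {s : Set ℂ} {τ : ℂ}

lemma symPowCoeff_eq_zero_of_lt {i k : ℕ} (h : i < k) : symPowCoeff G Q m i k = 0 := by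
  induction i using Nat.twoStepInduction generalizing k with
  | zero => funext; simp [symPowCoeff, h.ne']
  | one => funext; simp [symPowCoeff, h.ne']
  | more i ih₀ ih₁ =>
    funext τ
    simp [symPowCoeff, ih₁ (k := k) (by omega), ih₁ (k := k - 1) (by omega),
      ih₀ (k := k) (by omega), show k ≠ 0 by omega]

@[simp] lemma symPowCoeff_self (i : ℕ) : symPowCoeff G Q m i i = 1 := by
  induction i using Nat.twoStepInduction with
  | zero => funext; simp [symPowCoeff]
  | one => funext; simp [symPowCoeff]
  | more i _ ih₁ =>
    funext τ
    simp [symPowCoeff, ih₁, symPowCoeff_eq_zero_of_lt (show i + 1 < i + 2 by omega),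
      symPowCoeff_eq_zero_of_lt (show i < i + 2 by omega)]

lemma symPowCoeff_add_two_zero (i : ℕ) :
    symPowCoeff G Q m (i + 2) 0 = fun τ => ramD (symPowCoeff G Q m (i + 1) 0) τ
      + (2 * (i : ℂ) + 2) * G τ * symPowCoeff G Q m (i + 1) 0 τ
      + ((i : ℂ) + 1) * ((m : ℂ) - (i : ℂ)) * Q τ * symPowCoeff G Q m i 0 τ := by
  funext τ
  simp [symPowCoeff]

lemma differentiableOn_symPowCoeff (hs : IsOpen s) (hG : DifferentiableOn ℂ G s)
    (hQ : DifferentiableOn ℂ Q s) (i k : ℕ) :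
    DifferentiableOn ℂ (symPowCoeff G Q m i k) s := by
  induction i using Nat.twoStepInduction generalizing k with
  | zero => exact differentiableOn_const _
  | one => exact differentiableOn_const _
  | more i ih₀ ih₁ =>
    have hshift : DifferentiableOn ℂ
        (fun τ => if k = 0 then 0 else symPowCoeff G Q m (i + 1) (k - 1) τ) s := by
      split_ifs
      exacts [differentiableOn_const _, ih₁ _]
    exact ((((ih₁ k).ramD hs).add hshift).add
      (((differentiableOn_const _).mul hG).mul (ih₁ k))).add
      (((differentiableOn_const _).mul hQ).mul (ih₀ k))

lemma symPowCoeff_succ_zero_eq_of_recursion {R : ℕ → ℂ → ℂ}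
    (hR1 : R 1 = fun τ => (m : ℂ) * Q τ)
    (hR2 : R 2 = fun τ => (m : ℂ) * (ramD Q τ + 4 * G τ * Q τ))
    (hRrec : ∀ i : ℕ, 2 ≤ i → i ≤ m - 1 →
      R (i + 1) = fun τ => ramD (R i) τ + (2 * (i : ℂ) + 2) * G τ * R i τ +
        ((i : ℂ) + 1) * ((m : ℂ) - (i : ℂ)) * Q τ * R (i - 1) τ)
    {i : ℕ} (hi : 1 ≤ i) (him : i ≤ m) : symPowCoeff G Q m (i + 1) 0 = R i := by
  induction i using Nat.twoStepInduction with
  | zero => omega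
  | one => funext τ; simp [symPowCoeff, hR1]
  | more i ih₀ ih₁ =>
    rcases i with _ | i
    · rw [symPowCoeff_add_two_zero, ih₁ le_rfl (by omega), hR1, hR2]
      funext τ
      simp [symPowCoeff, ramD_const_mul]
      ring
    · rw [symPowCoeff_add_two_zero, ih₁ (by omega) (by omega), ih₀ (by omega) (by omega),
        hRrec (i + 2) (by omega) (by omega)]
      funext τ
      push_cast
      ring_nf

lemma symPowOp_zero : symPowOp G Q m 0 Y τ = Y τ := by
  simp [symPowOp, symPowCoeff]

lemma symPowOp_one : symPowOp G Q m 1 Y τ = ramD Y τ := by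
  simp [symPowOp, symPowCoeff]

lemma symPowOp_eq_iterate_add_sum (n : ℕ) : symPowOp G Q m n Y τ =
    (ramD^[n] Y) τ + ∑ k ∈ range n, symPowCoeff G Q m n k τ * (ramD^[k] Y) τ := by
  rw [symPowOp, sum_range_succ, symPowCoeff_self, Pi.one_apply, one_mul, add_comm]

lemma symPowOp_eq_sum_range {i N : ℕ} (h : i < N) : symPowOp G Q m i Y τ =
    ∑ k ∈ range N, symPowCoeff G Q m i k τ * (ramD^[k] Y) τ := by
  refine sum_subset (range_subset_range.mpr h) fun k _ hk => ?_
  rw [symPowCoeff_eq_zero_of_lt (by simpa using hk), Pi.zero_apply, zero_mul]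

lemma symPowOp_add_two (hs : IsOpen s) (hG : DifferentiableOn ℂ G s)
    (hQ : DifferentiableOn ℂ Q s) (hY : DifferentiableOn ℂ Y s) (hτ : τ ∈ s) (i : ℕ) :
    symPowOp G Q m (i + 2) Y τ = ramD (symPowOp G Q m (i + 1) Y) τ
      + (2 * (i : ℂ) + 2) * G τ * symPowOp G Q m (i + 1) Y τ
      + ((i : ℂ) + 1) * ((m : ℂ) - (i : ℂ)) * Q τ * symPowOp G Q m i Y τ := by
  have hc (j k : ℕ) : DifferentiableAt ℂ (symPowCoeff G Q m j k) τ :=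
    (differentiableOn_symPowCoeff hs hG hQ j k).differentiableAt (hs.mem_nhds hτ)
  have hY' (k : ℕ) : DifferentiableAt ℂ (ramD^[k] Y) τ :=
    (hY.iterate_ramD hs k).differentiableAt (hs.mem_nhds hτ)
  have hD : ramD (symPowOp G Q m (i + 1) Y) τ =
      ∑ k ∈ range (i + 3), ramD (symPowCoeff G Q m (i + 1) k) τ * (ramD^[k] Y) τ
        + ∑ k ∈ range (i + 2), symPowCoeff G Q m (i + 1) k τ * (ramD^[k + 1] Y) τ := by
    rw [sum_range_succ _ (i + 2), symPowCoeff_eq_zero_of_lt (by omega : i + 1 < i + 2),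
      ramD_zero, Pi.zero_apply, zero_mul, add_zero, ← sum_add_distrib]
    change ramD (fun z => ∑ k ∈ range (i + 2), _) τ = _
    rw [ramD_sum (F := fun k z => symPowCoeff G Q m (i + 1) k z * (ramD^[k] Y) z)
      fun k _ => (hc _ _).fun_mul (hY' k)]
    refine sum_congr rfl fun k _ => ?_
    rw [ramD_mul (hc _ _) (hY' k), Function.iterate_succ_apply']
  have hshift : ∑ k ∈ range (i + 2), symPowCoeff G Q m (i + 1) k τ * (ramD^[k + 1] Y) τ =
      ∑ k ∈ range (i + 3),
        (if k = 0 then 0 else symPowCoeff G Q m (i + 1) (k - 1) τ) * (ramD^[k] Y) τ := by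
    rw [sum_range_succ' _ (i + 2)]
    simp
  rw [hD, hshift, symPowOp_eq_sum_range (show i + 1 < i + 3 by omega),
    symPowOp_eq_sum_range (show i < i + 3 by omega), mul_sum, mul_sum, ← sum_add_distrib,
    ← sum_add_distrib, ← sum_add_distrib, symPowOp]
  refine sum_congr rfl fun k _ => ?_
  simp only [symPowCoeff]
  ring

lemma symPowOp_sum {n : ℕ} {ι : Type*} (hs : IsOpen s) (t : Finset ι) (c : ι → ℂ)
    {e : ι → ℂ → ℂ} (he : ∀ j ∈ t, DifferentiableOn ℂ (e j) s) (hτ : τ ∈ s) :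
    symPowOp G Q m n (fun z => ∑ j ∈ t, c j * e j z) τ =
      ∑ j ∈ t, c j * symPowOp G Q m n (e j) τ := by
  simp only [symPowOp, mul_sum]
  rw [sum_comm]
  refine sum_congr rfl fun k _ => ?_
  rw [iterate_ramD_sum hs t c he k hτ, mul_sum]
  exact sum_congr rfl fun j _ => by ring

lemma SolvesOn.const_mul_add {f g : ℂ → ℂ} (hs : IsOpen s)
    (hf : DifferentiableOn ℂ f s) (hg : DifferentiableOn ℂ g s)
    (hfode : SolvesOn G Q s f) (hgode : SolvesOn G Q s g) (α : ℂ) :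
    SolvesOn G Q s fun z => α * g z + f z := by
  have hD {a b : ℂ → ℂ} (ha : DifferentiableOn ℂ a s) (hb : DifferentiableOn ℂ b s) :
      Set.EqOn (ramD fun z => α * a z + b z) (fun z => α * ramD a z + ramD b z) s :=
    fun z hz => by
      rw [ramD_add ((ha.differentiableAt (hs.mem_nhds hz)).const_mul α)
        (hb.differentiableAt (hs.mem_nhds hz)), ramD_const_mul]
  intro τ hτ
  rw [ramD_congr_of_eqOn hs (hD hg hf) hτ, hD (hg.ramD hs) (hf.ramD hs) hτ, hD hg hf hτ]
  linear_combination α * hgode τ hτ + hfode τ hτ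

lemma ramD_pow_mul_ramD_pow_succ {y : ℂ → ℂ} (hy : DifferentiableAt ℂ y τ)
    (hy' : DifferentiableAt ℂ (ramD y) τ)
    (hode : ramD (ramD y) τ + 2 * G τ * ramD y τ + Q τ * y τ = 0) (a b : ℕ) :
    ramD (fun z => y z ^ a * ramD y z ^ (b + 1)) τ =
      a * y τ ^ (a - 1) * ramD y τ ^ (b + 2)
        - (b + 1) * (2 * G τ * y τ ^ a * ramD y τ ^ (b + 1)
          + Q τ * y τ ^ (a + 1) * ramD y τ ^ b) := by
  rw [ramD_mul (hy.fun_pow a) (hy'.fun_pow (b + 1)), ramD_pow hy, ramD_pow hy',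
    show ramD (ramD y) τ = -(2 * G τ * ramD y τ + Q τ * y τ) by linear_combination hode,
    Nat.add_sub_cancel]
  push_cast
  ring

lemma symPowOp_pow {y : ℂ → ℂ} (hs : IsOpen s) (hG : DifferentiableOn ℂ G s)
    (hQ : DifferentiableOn ℂ Q s) (hy : DifferentiableOn ℂ y s) (hode : SolvesOn G Q s y)
    {i : ℕ} (hi : i ≤ m + 1) :
    Set.EqOn (symPowOp G Q m i fun z => y z ^ m)
      (fun τ => m.descFactorial i * (y τ ^ (m - i) * ramD y τ ^ i)) s := by
  induction i using Nat.twoStepInduction with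
  | zero => intro τ _; simp [symPowOp_zero]
  | one =>
    intro τ hτ
    simp [symPowOp_one, ramD_pow (hy.differentiableAt (hs.mem_nhds hτ))]
    ring
  | more i ih₀ ih₁ =>
    intro τ hτ
    have hyτ := hy.differentiableAt (hs.mem_nhds hτ)
    have hy'τ := (hy.ramD hs).differentiableAt (hs.mem_nhds hτ)
    obtain ⟨n, rfl⟩ : ∃ n, m = n + (i + 1) := ⟨m - (i + 1), by omega⟩
    dsimp only
    rw [symPowOp_add_two hs hG hQ (hy.fun_pow _) hτ, ramD_congr_of_eqOn hs (ih₁ (by omega)) hτ,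
      ih₁ (by omega) hτ, ih₀ (by omega) hτ, ramD_const_mul,
      ramD_pow_mul_ramD_pow_succ hyτ hy'τ (hode τ hτ)]
    simp only [Nat.descFactorial_succ, show n + (i + 1) - (i + 1) = n by omega,
      show n + (i + 1) - i = n + 1 by omega, show n + (i + 1) - (i + 2) = n - 1 by omega]
    push_cast
    ring

lemma symPowOp_pow_mul_pow_eq_zero {f g : ℂ → ℂ} (hs : IsOpen s)
    (hG : DifferentiableOn ℂ G s) (hQ : DifferentiableOn ℂ Q s)
    (hf : DifferentiableOn ℂ f s) (hg : DifferentiableOn ℂ g s)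
    (hfode : SolvesOn G Q s f) (hgode : SolvesOn G Q s g) {j : ℕ} (hj : j ≤ m) :
    Set.EqOn (symPowOp G Q m (m + 1) fun z => f z ^ (m - j) * g z ^ j) 0 s := by
  intro τ hτ
  have he (j : ℕ) : DifferentiableOn ℂ (fun z => f z ^ (m - j) * g z ^ j) s :=
    (hf.fun_pow _).mul (hg.fun_pow _)
  have hpolar (α : ℂ) : ∑ j ∈ range (m + 1), α ^ j *
      (m.choose j * symPowOp G Q m (m + 1) (fun z => f z ^ (m - j) * g z ^ j) τ) = 0 := by
    have hpow : (fun z => (α * g z + f z) ^ m) =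
        fun z => ∑ j ∈ range (m + 1), α ^ j * m.choose j * (f z ^ (m - j) * g z ^ j) := by
      funext z
      rw [add_pow]
      exact sum_congr rfl fun j _ => by ring
    have h := symPowOp_pow (y := fun z => α * g z + f z) hs hG hQ ((hg.const_mul α).add hf)
      (hfode.const_mul_add hs hf hg hgode α) (le_refl (m + 1)) hτ
    rw [hpow, symPowOp_sum hs _ _ (fun j _ => he j) hτ,
      Nat.descFactorial_of_lt (Nat.lt_succ_self m), Nat.cast_zero] at h
    simpa only [zero_mul, mul_assoc] using h
  have := eq_zero_of_forall_sum_pow_mul_eq_zero hpolar hj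
  exact (mul_eq_zero.mp this).resolve_left (Nat.cast_ne_zero.mpr (Nat.choose_pos hj).ne')

end SymmetricPower

theorem stmt_11_general (m : ℕ) (hm : 2 ≤ m) (Q f g : ℂ → ℂ)
    (hQ : DifferentiableOn ℂ Q UHP)
    (hf : DifferentiableOn ℂ f UHP) (hg : DifferentiableOn ℂ g UHP)
    (hfode : ∀ τ ∈ UHP, ramD (ramD f) τ + 2 * GTwo τ * ramD f τ + Q τ * f τ = 0)
    (hgode : ∀ τ ∈ UHP, ramD (ramD g) τ + 2 * GTwo τ * ramD g τ + Q τ * g τ = 0)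
    (R : ℕ → ℂ → ℂ)
    (hR1 : R 1 = fun τ => (m : ℂ) * Q τ)
    (hR2 : R 2 = fun τ => (m : ℂ) * (ramD Q τ + 4 * GTwo τ * Q τ))
    (hRrec : ∀ i : ℕ, 2 ≤ i → i ≤ m - 1 →
      R (i + 1) = fun τ => ramD (R i) τ + (2 * (i : ℂ) + 2) * GTwo τ * R i τ +
        ((i : ℂ) + 1) * ((m : ℂ) - (i : ℂ)) * Q τ * R (i - 1) τ) :
    ∀ τ ∈ UHP,
      Matrix.det (Matrix.of fun i j : Fin (m + 1) =>
          (ramD^[(i : ℕ)] (ramD (fun z => f z ^ (m - (j : ℕ)) * g z ^ (j : ℕ)))) τ)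
        = (-1) ^ (m + 1) * R m τ *
          Matrix.det (Matrix.of fun i j : Fin (m + 1) =>
            (ramD^[(i : ℕ)] (fun z => f z ^ (m - (j : ℕ)) * g z ^ (j : ℕ))) τ) := by
  intro τ hτ
  have hlast (j : ℕ) (hj : j ≤ m) : (ramD^[m + 1] fun z => f z ^ (m - j) * g z ^ j) τ =
      ∑ k ∈ range (m + 1), -symPowCoeff GTwo Q m (m + 1) k τ *
        (ramD^[k] fun z => f z ^ (m - j) * g z ^ j) τ := by
    have h := symPowOp_pow_mul_pow_eq_zero isOpen_UHP differentiableOn_GTwo hQ hf hg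
      hfode hgode hj hτ
    rw [symPowOp_eq_iterate_add_sum, Pi.zero_apply] at h
    simp only [neg_mul, sum_neg_distrib]
    linear_combination h
  rw [Matrix.det_eq_of_rows_shift_of_last_row_eq_sum (fun k => -symPowCoeff GTwo Q m (m + 1) k τ)
    ?_ ?_, Fin.val_zero, symPowCoeff_succ_zero_eq_of_recursion hR1 hR2 hRrec (by omega) le_rfl]
  · ring
  · intro i
    funext j
    simp [Function.iterate_succ_apply]
  · funext j
    simp only [Matrix.of_apply, Fin.val_last]
    rw [← Function.iterate_succ_apply, hlast j (by omega), ← Fin.sum_univ_eq_sum_range]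
    simp

/-- if `f, g` are holomorphic solutions of
`(q d/dq)²y + 2·G₂·(q d/dq)y + Q·y = 0` on `ℍ` with nowhere-vanishing Wronskian,
and `R₁,…,R_m` are given by the recursion `R₁ = mQ`,
`R₂ = m(ΘQ + 4G₂Q)`, `R_{i+1} = ΘR_i + (2i+2)G₂R_i + (i+1)(m−i)QR_{i−1}`,
then the Wronskian of the derivatives `(f^{m-j}g^j)'` equals
`(−1)^{m+1}·R_m` times the Wronskian of the `f^{m-j}g^j` on `ℍ`. -/
theorem stmt_11 (m : ℕ) (hm : 2 ≤ m) (Q f g : ℂ → ℂ)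
    (hQ : DifferentiableOn ℂ Q UHP)
    (hf : DifferentiableOn ℂ f UHP) (hg : DifferentiableOn ℂ g UHP)
    (hW : ∀ τ ∈ UHP, f τ * ramD g τ - g τ * ramD f τ ≠ 0)
    (hfode : ∀ τ ∈ UHP, ramD (ramD f) τ + 2 * GTwo τ * ramD f τ + Q τ * f τ = 0)
    (hgode : ∀ τ ∈ UHP, ramD (ramD g) τ + 2 * GTwo τ * ramD g τ + Q τ * g τ = 0)
    (R : ℕ → ℂ → ℂ)
    (hR1 : R 1 = fun τ => (m : ℂ) * Q τ)
    (hR2 : R 2 = fun τ => (m : ℂ) * (ramD Q τ + 4 * GTwo τ * Q τ))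
    (hRrec : ∀ i : ℕ, 2 ≤ i → i ≤ m - 1 →
      R (i + 1) = fun τ => ramD (R i) τ + (2 * (i : ℂ) + 2) * GTwo τ * R i τ +
        ((i : ℂ) + 1) * ((m : ℂ) - (i : ℂ)) * Q τ * R (i - 1) τ) :
    ∀ τ ∈ UHP,
      Matrix.det (Matrix.of fun i j : Fin (m + 1) =>
          (ramD^[(i : ℕ)] (ramD (fun z => f z ^ (m - (j : ℕ)) * g z ^ (j : ℕ)))) τ)
        = (-1) ^ (m + 1) * R m τ *
          Matrix.det (Matrix.of fun i j : Fin (m + 1) =>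
            (ramD^[(i : ℕ)] (fun z => f z ^ (m - (j : ℕ)) * g z ^ (j : ℕ))) τ) :=
  stmt_11_general m hm Q f g hQ hf hg hfode hgode R hR1 hR2 hRrec
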